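/- Let z¹, z² be families of vectors indexed by {1,...,N}, τ, τ_m > 0, and λ ∈ [0,1]. Define p¹_{ik} = exp(z¹_i·z²_k/τ) / Σ_j exp(z¹_i·z²_j/τ), p²_{ik} = 1_{i≠k} exp(z²_i·z²_k/τ_m) / Σ_j 1_{i≠j} exp(z²_i·z²_j/τ_m), and w²_{ik} = λ·1_{i=k} + (1−λ)·p²_{ik}. Then L_SCE = −(1/N) Σ_i Σ_k w²_{ik} log p¹_{ik} equals λ·L_InfoNCE + (1−λ)·L_ReSSL + (1−λ)·L_ceil, where L_InfoNCE = −(1/N) Σ_i log p¹_{ii}, L_ReSSL = −(1/N) Σ_i Σ_k p²_{ik} log( 1_{i≠k} exp(z¹_i·z²_k/τ) / Σ_j 1_{i≠j} exp(z¹_i·z²_j/τ) ), and L_ceil = −(1/N) Σ_i log( Σ_j 1_{i≠j} exp(z¹_i·z²_j/τ) / Σ_j exp(z¹_i·z²_j/τ) ). -/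

import Mathlib

/-!
Row by row, the weight `w²ᵢ` splits into `λ` times the indicator of `i` and `1 - λ` times the
probability vector `p²ᵢ`, which vanishes at `k = i`. Off the diagonal,
`log (e_k / Σ e) = log (e_k / Σ_{j ≠ i} e_j) + log (Σ_{j ≠ i} e_j / Σ e)`, and averaging this
against `p²ᵢ` (total mass one) yields the ReSSL term plus the ceiling term.
-/

open Finset Real

section

variable {ι : Type*} [Fintype ι] [DecidableEq ι]

lemma sum_ite_ne_pos [Nontrivial ι] {f : ι → ℝ} (hf : ∀ j, 0 < f j) (i : ι) :
    0 < ∑ j, if i ≠ j then f j else 0 := by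
  obtain ⟨k, hk⟩ := exists_ne i
  refine sum_pos' (fun j _ => ?_) ⟨k, mem_univ k, by simpa [hk.symm] using hf k⟩
  split_ifs
  exacts [(hf j).le, le_rfl]

lemma sum_mix_indicator_mul (lam : ℝ) (i : ι) (q a : ι → ℝ) :
    ∑ k, (lam * (if i = k then 1 else 0) + (1 - lam) * q k) * a k =
      lam * a i + (1 - lam) * ∑ k, q k * a k := by
  simp [add_mul, sum_add_distrib, mul_assoc, mul_sum]

lemma sum_mul_log_div_sum_eq [Nontrivial ι] {e q : ι → ℝ} (he : ∀ j, 0 < e j) {i : ι}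
    (hq : ∑ k, q k = 1) (hqi : q i = 0) :
    ∑ k, q k * log (e k / ∑ j, e j) =
      ∑ k, q k * log ((if i ≠ k then e k else 0) / ∑ j, if i ≠ j then e j else 0) +
        log ((∑ j, if i ≠ j then e j else 0) / ∑ j, e j) := by
  set S' := ∑ j, if i ≠ j then e j else 0
  have hS' : 0 < S' := sum_ite_ne_pos he i
  have hS : 0 < ∑ j, e j := sum_pos (fun j _ => he j) univ_nonempty
  have hsplit : ∀ k, q k * log (e k / ∑ j, e j) =
      q k * (log ((if i ≠ k then e k else 0) / S') + log (S' / ∑ j, e j)) := by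
    intro k
    by_cases hik : i = k
    · simp [← hik, hqi]
    · rw [if_pos hik, log_div (he k).ne' hS.ne', log_div (he k).ne' hS'.ne',
        log_div hS'.ne' hS.ne']
      ring
  simp only [hsplit, mul_add, sum_add_distrib, ← sum_mul, hq, one_mul]

end

theorem stmt_0_general (N d : ℕ) (hN : 2 ≤ N) (z1 z2 : Fin N → Fin d → ℝ)
    (τ τm lam : ℝ)
    (p1 p2 w2 : Fin N → Fin N → ℝ)
    (hp1 : ∀ i k, p1 i k =
      Real.exp ((∑ t, z1 i t * z2 k t) / τ) /
        ∑ j, Real.exp ((∑ t, z1 i t * z2 j t) / τ))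
    (hp2 : ∀ i k, p2 i k =
      (if i ≠ k then Real.exp ((∑ t, z2 i t * z2 k t) / τm) else 0) /
        ∑ j, (if i ≠ j then Real.exp ((∑ t, z2 i t * z2 j t) / τm) else 0))
    (hw2 : ∀ i k, w2 i k = lam * (if i = k then 1 else 0) + (1 - lam) * p2 i k) :
    -(1 / (N:ℝ)) * ∑ i, ∑ k, w2 i k * Real.log (p1 i k) =
      lam * (-(1 / (N:ℝ)) * ∑ i, Real.log (p1 i i)) +
      (1 - lam) * (-(1 / (N:ℝ)) * ∑ i, ∑ k, p2 i k *
        Real.log ((if i ≠ k then Real.exp ((∑ t, z1 i t * z2 k t) / τ) else 0) /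
          ∑ j, (if i ≠ j then Real.exp ((∑ t, z1 i t * z2 j t) / τ) else 0))) +
      (1 - lam) * (-(1 / (N:ℝ)) * ∑ i, Real.log
        ((∑ j, (if i ≠ j then Real.exp ((∑ t, z1 i t * z2 j t) / τ) else 0)) /
          ∑ j, Real.exp ((∑ t, z1 i t * z2 j t) / τ))) := by
  have : Nontrivial (Fin N) := Fin.nontrivial_iff_two_le.mpr hN
  have hp2_sum : ∀ i, ∑ k, p2 i k = 1 := fun i => by
    simp only [hp2, ← sum_div]
    exact div_self (sum_ite_ne_pos (fun _ => exp_pos _) i).ne'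
  have hp2_diag : ∀ i, p2 i i = 0 := fun i => by simp [hp2]
  have hrow : ∀ i, ∑ k, w2 i k * log (p1 i k) =
      lam * log (p1 i i) +
      (1 - lam) * ∑ k, p2 i k *
        log ((if i ≠ k then exp ((∑ t, z1 i t * z2 k t) / τ) else 0) /
          ∑ j, if i ≠ j then exp ((∑ t, z1 i t * z2 j t) / τ) else 0) +
      (1 - lam) * log ((∑ j, if i ≠ j then exp ((∑ t, z1 i t * z2 j t) / τ) else 0) /
          ∑ j, exp ((∑ t, z1 i t * z2 j t) / τ)) := fun i => by
    simp only [hw2, sum_mix_indicator_mul, hp1]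
    rw [sum_mul_log_div_sum_eq (fun _ => exp_pos _) (hp2_sum i) (hp2_diag i)]
    ring
  simp only [hrow, sum_add_distrib, ← mul_sum]
  ring

theorem stmt_0 (N d : ℕ) (hN : 2 ≤ N) (z1 z2 : Fin N → Fin d → ℝ)
    (τ τm lam : ℝ) (hτ : 0 < τ) (hτm : 0 < τm) (hlam : lam ∈ Set.Icc (0:ℝ) 1)
    (p1 p2 w2 : Fin N → Fin N → ℝ)
    (hp1 : ∀ i k, p1 i k =
      Real.exp ((∑ t, z1 i t * z2 k t) / τ) /
        ∑ j, Real.exp ((∑ t, z1 i t * z2 j t) / τ))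
    (hp2 : ∀ i k, p2 i k =
      (if i ≠ k then Real.exp ((∑ t, z2 i t * z2 k t) / τm) else 0) /
        ∑ j, (if i ≠ j then Real.exp ((∑ t, z2 i t * z2 j t) / τm) else 0))
    (hw2 : ∀ i k, w2 i k = lam * (if i = k then 1 else 0) + (1 - lam) * p2 i k) :
    -(1 / (N:ℝ)) * ∑ i, ∑ k, w2 i k * Real.log (p1 i k) =
      lam * (-(1 / (N:ℝ)) * ∑ i, Real.log (p1 i i)) +
      (1 - lam) * (-(1 / (N:ℝ)) * ∑ i, ∑ k, p2 i k *
        Real.log ((if i ≠ k then Real.exp ((∑ t, z1 i t * z2 k t) / τ) else 0) /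
          ∑ j, (if i ≠ j then Real.exp ((∑ t, z1 i t * z2 j t) / τ) else 0))) +
      (1 - lam) * (-(1 / (N:ℝ)) * ∑ i, Real.log
        ((∑ j, (if i ≠ j then Real.exp ((∑ t, z1 i t * z2 j t) / τ) else 0)) /
          ∑ j, Real.exp ((∑ t, z1 i t * z2 j t) / τ))) :=
  stmt_0_general N d hN z1 z2 τ τm lam p1 p2 w2 hp1 hp2 hw2
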